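/- Let d : ℕ. For p ∈ MvPolynomial (Fin d) ℝ and t ∈ ℝ, define the heat operator e^{tΔ/2} p := ∑_{k ≤ totalDegree p} ((t/2)^k / k!) • Δ^k p, where Δ p = ∑_{i : Fin d} pderiv i (pderiv i p) (the sum terminates since Δ^k p = 0 for 2k > totalDegree p). Then the heat operators form a one-parameter group on polynomials: for all t, u ∈ ℝ and all p, e^{tΔ/2}(e^{uΔ/2} p) = e^{(t+u)Δ/2} p. -/
import Mathlib

open MvPolynomial

/-- The Laplacian `Δ p = ∑ i, ∂²p/∂x_i²` on polynomials in `d` variables. -/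
noncomputable def mvLaplacian {d : ℕ} (p : MvPolynomial (Fin d) ℝ) :
    MvPolynomial (Fin d) ℝ :=
  ∑ i : Fin d, pderiv i (pderiv i p)

/-- The heat operator `e^{tΔ/2} p = ∑_{k ≤ totalDegree p} ((t/2)^k / k!) • Δ^k p`
(a terminating series, since `Δ` is locally nilpotent). -/
noncomputable def heatOp {d : ℕ} (t : ℝ) (p : MvPolynomial (Fin d) ℝ) :
    MvPolynomial (Fin d) ℝ :=
  ∑ k ∈ Finset.range (p.totalDegree + 1),
    ((t / 2) ^ k / (k.factorial : ℝ)) • (mvLaplacian (d := d))^[k] p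

lemma mvLaplacian_add {d : ℕ} (p q : MvPolynomial (Fin d) ℝ) :
    mvLaplacian (p + q) = mvLaplacian p + mvLaplacian q := by
  simp [mvLaplacian, map_add, Finset.sum_add_distrib]

lemma mvLaplacian_smul {d : ℕ} (c : ℝ) (p : MvPolynomial (Fin d) ℝ) :
    mvLaplacian (c • p) = c • mvLaplacian p := by
  simp [mvLaplacian, Finset.smul_sum]

lemma mvLaplacian_zero {d : ℕ} : mvLaplacian (0 : MvPolynomial (Fin d) ℝ) = 0 := by
  simp [mvLaplacian]

lemma mvLaplacian_iter_smul {d : ℕ} (k : ℕ) (c : ℝ) (p : MvPolynomial (Fin d) ℝ) :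
    mvLaplacian^[k] (c • p) = c • mvLaplacian^[k] p := by
  induction k generalizing p with
  | zero => simp
  | succ k ih =>
    simp only [Function.iterate_succ_apply]
    rw [mvLaplacian_smul, ih]

lemma mvLaplacian_sum {d : ℕ} {ι : Type*} (s : Finset ι)
    (f : ι → MvPolynomial (Fin d) ℝ) :
    mvLaplacian (∑ i ∈ s, f i) = ∑ i ∈ s, mvLaplacian (f i) := by
  classical
  induction s using Finset.cons_induction with
  | empty => simp [mvLaplacian_zero]
  | cons a s ha ihs =>
    rw [Finset.sum_cons, Finset.sum_cons, mvLaplacian_add, ihs]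

lemma mvLaplacian_iter_sum {d : ℕ} (k : ℕ) {ι : Type*} (s : Finset ι)
    (f : ι → MvPolynomial (Fin d) ℝ) :
    mvLaplacian^[k] (∑ i ∈ s, f i) = ∑ i ∈ s, mvLaplacian^[k] (f i) := by
  induction k generalizing f with
  | zero => simp
  | succ k ih =>
    simp only [Function.iterate_succ_apply]
    rw [mvLaplacian_sum, ih]

lemma totalDegree_pderiv_le {d : ℕ} (i : Fin d) (p : MvPolynomial (Fin d) ℝ) {n : ℕ}
    (h : p.totalDegree ≤ n + 1) : (pderiv i p).totalDegree ≤ n := by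
  classical
  conv_lhs => rw [p.as_sum, map_sum]
  apply totalDegree_finsetSum_le
  intro m hm
  rw [pderiv_monomial]
  by_cases hmi : m i = 0
  · simp [hmi]
  · refine (totalDegree_monomial_le _ _).trans ?_
    show (m - Finsupp.single i 1).sum (fun _ e => e) ≤ n
    have hle : Finsupp.single i 1 ≤ m := by
      rw [Finsupp.single_le_iff]
      omega
    have hsum : (m - Finsupp.single i 1).sum (fun _ e => e) + 1 = m.sum (fun _ e => e) := by
      have : (m - Finsupp.single i 1) + Finsupp.single i 1 = m := tsub_add_cancel_of_le hle
      calc (m - Finsupp.single i 1).sum (fun _ e => e) + 1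
          = ((m - Finsupp.single i 1) + Finsupp.single i 1).sum (fun _ e => e) := by
            rw [Finsupp.sum_add_index (by simp) (by intros; rfl)]
            simp
        _ = m.sum (fun _ e => e) := by rw [this]
    have hmle : m.sum (fun _ e => e) ≤ n + 1 := (le_totalDegree hm).trans h
    omega

lemma totalDegree_mvLaplacian_le {d : ℕ} (p : MvPolynomial (Fin d) ℝ) {n : ℕ}
    (h : p.totalDegree ≤ n + 2) : (mvLaplacian p).totalDegree ≤ n := by
  apply totalDegree_finsetSum_le
  intro i _
  exact totalDegree_pderiv_le i _ (totalDegree_pderiv_le i p h)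

lemma mvLaplacian_of_deg_zero {d : ℕ} (p : MvPolynomial (Fin d) ℝ)
    (h : p.totalDegree = 0) : mvLaplacian p = 0 := by
  apply Finset.sum_eq_zero
  intro i _
  have : (pderiv i p).totalDegree = 0 := by
    have := totalDegree_pderiv_le (n := 0) i p (by omega)
    omega
  have hp : ∀ (m : Fin d →₀ ℕ), m ∈ p.support → ∀ x, m x = 0 :=
    (totalDegree_eq_zero_iff _ p).mp h
  have : pderiv i p = 0 := by
    conv_lhs => rw [p.as_sum, map_sum]
    apply Finset.sum_eq_zero
    intro m hm
    rw [pderiv_monomial]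
    simp [hp m hm i]
  rw [this, map_zero]

lemma mvLaplacian_iter_eq_zero {d : ℕ} (k : ℕ) (p : MvPolynomial (Fin d) ℝ)
    (h : p.totalDegree < k) : mvLaplacian^[k] p = 0 := by
  induction k generalizing p with
  | zero => omega
  | succ k ih =>
    rw [Function.iterate_succ_apply]
    by_cases hp : p.totalDegree = 0
    · rw [mvLaplacian_of_deg_zero p hp, Function.iterate_fixed mvLaplacian_zero]
    · apply ih
      have h2 : p.totalDegree ≤ (p.totalDegree - 2) + 2 := by omega
      have := totalDegree_mvLaplacian_le p h2
      omega

lemma totalDegree_mvLaplacian_iter_le {d : ℕ} (k : ℕ) (p : MvPolynomial (Fin d) ℝ) :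
    (mvLaplacian^[k] p).totalDegree ≤ p.totalDegree := by
  induction k generalizing p with
  | zero => simp
  | succ k ih =>
    rw [Function.iterate_succ_apply]
    refine (ih _).trans ?_
    by_cases hp : p.totalDegree = 0
    · rw [mvLaplacian_of_deg_zero p hp]
      simp
    · have h2 : p.totalDegree ≤ (p.totalDegree - 2) + 2 := by omega
      have := totalDegree_mvLaplacian_le p h2
      omega

lemma heatOp_eq_sum {d : ℕ} (t : ℝ) (p : MvPolynomial (Fin d) ℝ) {n : ℕ}
    (h : p.totalDegree < n) :
    heatOp t p = ∑ k ∈ Finset.range n,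
      ((t / 2) ^ k / (k.factorial : ℝ)) • mvLaplacian^[k] p := by
  unfold heatOp
  apply Finset.sum_subset (Finset.range_subset_range.mpr (by omega))
  intro k hk hk'
  rw [Finset.mem_range] at hk hk'
  rw [mvLaplacian_iter_eq_zero k p (by omega), smul_zero]

lemma totalDegree_heatOp_le {d : ℕ} (t : ℝ) (p : MvPolynomial (Fin d) ℝ) :
    (heatOp t p).totalDegree ≤ p.totalDegree := by
  apply totalDegree_finsetSum_le
  intro k _
  exact (totalDegree_smul_le _ _).trans (totalDegree_mvLaplacian_iter_le k p)

lemma triangle_sum {M : Type*} [AddCommMonoid M] (K : ℕ) (g : ℕ → ℕ → M)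
    (hg : ∀ k j, K ≤ k + j → g k j = 0) :
    ∑ k ∈ Finset.range K, ∑ j ∈ Finset.range K, g k j
      = ∑ n ∈ Finset.range K, ∑ k ∈ Finset.range (n + 1), g k (n - k) := by
  rw [Finset.sum_range_diag_flip]
  refine Finset.sum_congr rfl fun m hm => ?_
  refine (Finset.sum_subset (Finset.range_subset_range.mpr (Nat.sub_le K m)) ?_).symm
  intro j hj hj'
  rw [Finset.mem_range] at hj hj'
  exact hg m j (by omega)

/-- The heat operators form a one-parameter group on polynomials:
`e^{tΔ/2} ∘ e^{uΔ/2} = e^{(t+u)Δ/2}`. -/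
theorem heatOp_heatOp (d : ℕ) (t u : ℝ) (p : MvPolynomial (Fin d) ℝ) :
    heatOp t (heatOp u p) = heatOp (t + u) p := by
  have key : heatOp t (heatOp u p)
      = ∑ k ∈ Finset.range (p.totalDegree + 1), ∑ j ∈ Finset.range (p.totalDegree + 1),
          (((t / 2) ^ k / (k.factorial : ℝ)) * ((u / 2) ^ j / (j.factorial : ℝ)))
            • mvLaplacian^[k + j] p := by
    rw [heatOp_eq_sum t (heatOp u p)
      (lt_of_le_of_lt (totalDegree_heatOp_le u p) (Nat.lt_succ_self _)),
      heatOp_eq_sum u p (Nat.lt_succ_self _)]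
    refine Finset.sum_congr rfl fun k _ => ?_
    rw [mvLaplacian_iter_sum, Finset.smul_sum]
    refine Finset.sum_congr rfl fun j _ => ?_
    rw [mvLaplacian_iter_smul, smul_smul, ← Function.iterate_add_apply]
  rw [key, heatOp_eq_sum (t + u) p (Nat.lt_succ_self _),
    triangle_sum (p.totalDegree + 1)
      (fun k j => (((t / 2) ^ k / (k.factorial : ℝ)) * ((u / 2) ^ j / (j.factorial : ℝ)))
        • mvLaplacian^[k + j] p)
      (fun k j h => by
        show (((t / 2) ^ k / (k.factorial : ℝ)) * ((u / 2) ^ j / (j.factorial : ℝ)))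
            • mvLaplacian^[k + j] p = 0
        rw [mvLaplacian_iter_eq_zero (k + j) p (by omega), smul_zero])]
  refine Finset.sum_congr rfl fun n hn => ?_
  have hcoeff : ((t + u) / 2) ^ n / (n.factorial : ℝ)
      = ∑ k ∈ Finset.range (n + 1),
          ((t / 2) ^ k / (k.factorial : ℝ)) * ((u / 2) ^ (n - k) / ((n - k).factorial : ℝ)) := by
    rw [add_div, add_pow, Finset.sum_div]
    refine Finset.sum_congr rfl fun k hk => ?_
    rw [Finset.mem_range] at hk
    have hk' : k ≤ n := by omega
    rw [Nat.cast_choose ℝ hk']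
    have h1 : (k.factorial : ℝ) ≠ 0 := Nat.cast_ne_zero.mpr k.factorial_ne_zero
    have h2 : ((n - k).factorial : ℝ) ≠ 0 := Nat.cast_ne_zero.mpr (n - k).factorial_ne_zero
    have h3 : (n.factorial : ℝ) ≠ 0 := Nat.cast_ne_zero.mpr n.factorial_ne_zero
    field_simp
  rw [hcoeff, Finset.sum_smul]
  refine Finset.sum_congr rfl fun k hk => ?_
  rw [Finset.mem_range] at hk
  show (((t / 2) ^ k / (k.factorial : ℝ)) * ((u / 2) ^ (n - k) / ((n - k).factorial : ℝ)))
      • mvLaplacian^[k + (n - k)] p = _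
  have hkn : k + (n - k) = n := by omega
  rw [hkn]
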